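/- arXiv:2311.08514 — 3 statements merged into one kernel-verified Lean document; each statement's English description precedes it below -/
import Mathlib

section
/- Let (G,q) be a pre-metric group whose quadratic form is wild, i.e., the restriction of q to the radical rad(G,q) is a nontrivial homomorphism. Then the Gauss sum vanishes: Θ(G,q) = 0. -/
noncomputable def qzExp (x : AddCircle (1 : ℚ)) : ℂ :=
  Complex.exp (2 * Real.pi * Complex.I * ((Quotient.out x : ℚ) : ℂ))

lemma exp_congr {a b : ℚ} (h : (a : AddCircle (1:ℚ)) = (b : AddCircle (1:ℚ))) :
    Complex.exp (2 * Real.pi * Complex.I * (a : ℂ)) =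
    Complex.exp (2 * Real.pi * Complex.I * (b : ℂ)) := by
  rw [QuotientAddGroup.eq] at h
  obtain ⟨n, hn⟩ := h
  have hab : b = a + n := by
    have := hn
    simp [zsmul_eq_mul] at this
    linarith [this]
  subst hab
  push_cast
  rw [mul_add, Complex.exp_add]
  have : Complex.exp (2 * Real.pi * Complex.I * (n : ℂ)) = 1 := by
    rw [show (2 * Real.pi * Complex.I * (n : ℂ)) = (n : ℤ) * (2 * Real.pi * Complex.I) by push_cast; ring]
    exact Complex.exp_int_mul_two_pi_mul_I n
  rw [this, mul_one]

lemma qzExp_coe (r : ℚ) : qzExp (r : AddCircle (1 : ℚ)) =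
    Complex.exp (2 * Real.pi * Complex.I * (r : ℂ)) :=
  exp_congr (Quotient.out_eq _)

lemma qzExp_add (a b : AddCircle (1:ℚ)) : qzExp (a + b) = qzExp a * qzExp b := by
  induction a using QuotientAddGroup.induction_on with | H x => ?_
  induction b using QuotientAddGroup.induction_on with | H y => ?_
  rw [← AddCircle.coe_add, qzExp_coe, qzExp_coe, qzExp_coe, ← Complex.exp_add]
  push_cast
  ring_nf

lemma qzExp_ne_one {a : AddCircle (1:ℚ)} (h : a ≠ 0) : qzExp a ≠ 1 := by
  induction a using QuotientAddGroup.induction_on with | H x => ?_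
  rw [qzExp_coe]
  intro hc
  rw [Complex.exp_eq_one_iff] at hc
  obtain ⟨n, hn⟩ := hc
  have h2 : (2 * Real.pi * Complex.I : ℂ) ≠ 0 := by
    simp [Real.pi_ne_zero, Complex.I_ne_zero]
  have hx : (x : ℂ) = n := by
    apply mul_left_cancel₀ h2
    rw [hn]; ring
  have hxq : x = (n : ℚ) := by exact_mod_cast hx
  apply h
  rw [hxq, QuotientAddGroup.eq_zero_iff]
  exact ⟨n, by simp⟩

noncomputable def gSum (G : Type*) [AddCommGroup G] (q : G → AddCircle (1 : ℚ)) : ℂ :=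
  (1 / Real.sqrt (Nat.card G)) * ∑ᶠ x : G, qzExp (q x)

/-- The Gauss sum of a wild degenerate pre-metric group vanishes. -/
theorem stmt4 (G : Type*) [AddCommGroup G] [Finite G]
    (q : G → AddCircle (1 : ℚ))
    (hquad : ∀ (u : ℤ) (x : G), q (u • x) = u ^ 2 • q x)
    (hbil : ∀ x y z : G, q (x + y + z) - q (x + y) - q z =
      (q (x + z) - q x - q z) + (q (y + z) - q y - q z))
    (hwild : ∃ g : G, (∀ z, q (g + z) - q g - q z = 0) ∧ q g ≠ 0) :
    gSum G q = 0 := by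
  obtain ⟨g, hg, hqg⟩ := hwild
  have hadd : ∀ z, q (g + z) = q g + q z := by
    intro z
    have h := hg z
    rw [sub_sub, sub_eq_zero] at h
    exact h
  cases nonempty_fintype G
  set S := ∑ x : G, qzExp (q x) with hSdef
  have h1 : S = qzExp (q g) * S := by
    have hb : ∑ x : G, qzExp (q (g + x)) = S :=
      Fintype.sum_bijective (g + ·) (Equiv.addLeft g).bijective _ _ (fun x => rfl)
    calc S = ∑ x : G, qzExp (q (g + x)) := hb.symm
    _ = ∑ x : G, qzExp (q g) * qzExp (q x) := by
        simp only [hadd, qzExp_add]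
    _ = qzExp (q g) * S := by rw [← Finset.mul_sum]
  have h2 : (qzExp (q g) - 1) * S = 0 := by
    rw [sub_mul, one_mul, ← h1, sub_self]
  have hS0 : S = 0 := by
    rcases mul_eq_zero.1 h2 with h | h
    · exact absurd (sub_eq_zero.1 h) (qzExp_ne_one hqg)
    · exact h
  unfold gSum
  rw [finsum_eq_sum_of_fintype, ← hSdef, hS0, mul_zero]
end

section
/- Let (G,q) be a tame degenerate pre-metric group, i.e., q vanishes on the radical R = rad(G,q). Then q descends to a well-defined quadratic form q̄ on G/R, and the Gauss sums satisfy Θ(G,q) = √|R| · Θ(G/R, q̄). -/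
/-! The tameness condition makes `q` invariant under translation by the radical, so it factors
through `G ⧸ R`; each fibre of `G → G ⧸ R` has `|R|` points, so the sum over `G` is `|R|` times
the sum over `G ⧸ R`, and `|G| = |G ⧸ R| · |R|` turns the factor `|R| / √|G|` into
`√|R| / √|G ⧸ R|`. -/

theorem map_add_eq_of_polar_eq_zero {G A : Type*} [AddCommGroup G] [AddCommGroup A]
    (q : G → A) {g : G} (hpolar : ∀ z, q (g + z) - q g - q z = 0) (hg : q g = 0) (z : G) :
    q (g + z) = q z := by
  simpa [hg, sub_eq_zero] using hpolar z

theorem AddSubgroup.finsum_comp_mk {G M : Type*} [AddCommGroup G] [Finite G] [AddCommMonoid M]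
    (R : AddSubgroup G) (f : G ⧸ R → M) :
    ∑ᶠ x : G, f x = Nat.card R • ∑ᶠ y : G ⧸ R, f y := by
  classical
  have := Fintype.ofFinite G
  rw [finsum_eq_sum_of_fintype, finsum_eq_sum_of_fintype, Finset.smul_sum,
    Fintype.sum_equiv AddSubgroup.addGroupEquivQuotientProdAddSubgroup (fun x : G => f x)
      (fun p => f p.1) fun _ => rfl,
    Fintype.sum_prod_type]
  simp only [Finset.sum_const, Finset.card_univ, Nat.card_eq_fintype_card]

theorem one_div_sqrt_mul_mul_self {a b : ℝ} (hb : 0 < b) :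
    1 / √(a * b) * b = √b * (1 / √a) := by
  have : √b ≠ 0 := (Real.sqrt_pos.mpr hb).ne'
  rw [Real.sqrt_mul' a hb.le]
  field_simp
  rw [Real.sq_sqrt hb.le]

theorem gSum_comp_mk {G : Type*} [AddCommGroup G] [Finite G] (R : AddSubgroup G)
    (qbar : G ⧸ R → AddCircle (1 : ℚ)) :
    gSum G (fun x => qbar x) = √(Nat.card R) * gSum (G ⧸ R) qbar := by
  have hcard : (Nat.card G : ℝ) = Nat.card (G ⧸ R) * Nat.card R := by
    exact_mod_cast R.card_eq_card_quotient_mul_card_addSubgroup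
  have hscalar :
      (1 / √(Nat.card G) : ℝ) * Nat.card R = √(Nat.card R) * (1 / √(Nat.card (G ⧸ R))) := by
    rw [hcard]
    exact one_div_sqrt_mul_mul_self (by exact_mod_cast Nat.card_pos)
  rw [gSum, gSum, R.finsum_comp_mk (fun y => qzExp (qbar y)), nsmul_eq_mul, ← mul_assoc,
    ← mul_assoc]
  exact_mod_cast congrArg (fun r : ℝ => (r : ℂ) * ∑ᶠ y, qzExp (qbar y)) hscalar

theorem stmt5_general (G : Type*) [AddCommGroup G] [Finite G]
    (q : G → AddCircle (1 : ℚ))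
    (hquad : ∀ (u : ℤ) (x : G), q (u • x) = u ^ 2 • q x)
    (R : AddSubgroup G)
    (hR : ∀ g : G, g ∈ R ↔ ∀ z, q (g + z) - q g - q z = 0)
    (htame : ∀ g ∈ R, q g = 0) :
    ∃ qbar : G ⧸ R → AddCircle (1 : ℚ),
      (∀ x : G, qbar (QuotientAddGroup.mk x) = q x) ∧
      (∀ (u : ℤ) (x : G ⧸ R), qbar (u • x) = u ^ 2 • qbar x) ∧
      gSum G q = Real.sqrt (Nat.card R) * gSum (G ⧸ R) qbar := by
  have hcoset (a b : G) (hab : QuotientAddGroup.leftRel R a b) : q a = q b := by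
    have hmem := QuotientAddGroup.leftRel_apply.mp hab
    simpa using (map_add_eq_of_polar_eq_zero q ((hR _).mp hmem) (htame _ hmem) a).symm
  refine ⟨Quotient.lift q hcoset, fun _ => rfl, fun u y => ?_, ?_⟩
  · induction y using QuotientAddGroup.induction_on with
    | H x => exact hquad u x
  · exact gSum_comp_mk R (Quotient.lift q hcoset)

/-- For a tame pre-metric group, q descends to the quotient by the radical and
Θ(G,q) = √|R| · Θ(G/R, q̄). -/
theorem stmt5 (G : Type*) [AddCommGroup G] [Finite G]
    (q : G → AddCircle (1 : ℚ))
    (hquad : ∀ (u : ℤ) (x : G), q (u • x) = u ^ 2 • q x)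
    (hbil : ∀ x y z : G, q (x + y + z) - q (x + y) - q z =
      (q (x + z) - q x - q z) + (q (y + z) - q y - q z))
    (R : AddSubgroup G)
    (hR : ∀ g : G, g ∈ R ↔ ∀ z, q (g + z) - q g - q z = 0)
    (htame : ∀ g ∈ R, q g = 0) :
    ∃ qbar : G ⧸ R → AddCircle (1 : ℚ),
      (∀ x : G, qbar (QuotientAddGroup.mk x) = q x) ∧
      (∀ (u : ℤ) (x : G ⧸ R), qbar (u • x) = u ^ 2 • qbar x) ∧
      gSum G q = Real.sqrt (Nat.card R) * gSum (G ⧸ R) qbar :=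
  stmt5_general G q hquad R hR htame
end

section
/- For a prime p, positive integer r, and odd integer α, the Gauss sum of the quadratic form q(x) = α x²/2^{r+1} on ℤ/2^rℤ satisfies Θ(ℤ/2^rℤ, q) = (−1)^{r(α²−1)/8} · exp(2πi·α/8). -/
/-!
With `e z = exp (2πiz)` and `T r = ∑_{k < 2^r} e (α k² / 2^(r+1))`, the Gauss sum is `T r / √(2^r)`.
For `r ≥ 1`, write `k < 2^(r+2)` as `y` or `2^(r+1) + y` with `y < 2^(r+1)`: the second half is the
first twisted by `(-1)^y`, so odd `y` cancel and even `y = 2z` give back `T r`, whence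
`T (r+2) = 2 T r`. It remains to compute `T 2 = 2 e (α/8)` and `T 1 = 1 + i^α`; the latter equals
`√2 (-1)^((α²-1)/8) e (α/8)` by inspecting the four odd residues of `α` mod 8, using
`√2 e (1/8) = 1 + i`.
-/

open Complex Finset

theorem neg_one_zpow_sq_sub_one_div_eight_emod {K : Type*} [DivisionRing K] (α : ℤ) :
    (-1 : K) ^ ((α ^ 2 - 1) / 8) = (-1) ^ (((α % 8) ^ 2 - 1) / 8) := by
  set q := α / 8
  set s := α % 8
  have hdiv : α = 8 * q + s := by omega
  have hα : α ^ 2 - 1 = (s ^ 2 - 1) + (2 * (q * (4 * q + s))) * 8 := by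
    linear_combination (α + 8 * q + s) * hdiv
  rw [hα, Int.add_mul_ediv_right _ _ (by norm_num), zpow_add₀ (by norm_num),
    (even_two_mul _).neg_one_zpow, mul_one]

theorem Finset.sum_range_two_mul_one_add_neg_one_pow {R : Type*} [CommRing R] (M : ℕ)
    (g : ℕ → R) :
    ∑ y ∈ range (2 * M), (1 + (-1) ^ y) * g y = 2 * ∑ z ∈ range M, g (2 * z) := by
  induction M with
  | zero => simp
  | succ M ih =>
    rw [Nat.mul_succ, sum_range_succ, sum_range_succ, ih, sum_range_succ, pow_succ,
      (even_two_mul M).neg_one_pow]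
    ring

theorem ZMod.sum_val_eq_sum_range {M : Type*} [AddCommMonoid M] (n : ℕ) [NeZero n]
    (f : ℕ → M) : ∑ x : ZMod n, f x.val = ∑ k ∈ range n, f k := by
  obtain ⟨m, rfl⟩ := Nat.exists_eq_succ_of_ne_zero (NeZero.ne n)
  exact Fin.sum_univ_eq_sum_range f (m + 1)

namespace DyadicGaussSum

noncomputable def e (z : ℂ) : ℂ := exp (2 * Real.pi * I * z)

theorem e_add (z w : ℂ) : e (z + w) = e z * e w := by
  simp only [e, mul_add, exp_add]

theorem e_intCast (n : ℤ) : e n = 1 := by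
  rw [e, mul_comm, exp_int_mul_two_pi_mul_I]

theorem e_zero : e 0 = 1 := by
  simp [e]

theorem e_add_intCast (z : ℂ) (n : ℤ) : e (z + n) = e z := by
  rw [e_add, e_intCast, mul_one]

theorem e_natCast_mul (n : ℕ) (z : ℂ) : e (n * z) = e z ^ n := by
  rw [e, mul_left_comm, exp_nat_mul, e]

theorem e_half : e (1 / 2) = -1 := by
  rw [e, show 2 * (Real.pi : ℂ) * I * (1 / 2) = Real.pi * I by ring, exp_pi_mul_I]

theorem e_odd_div_two {α : ℤ} (hα : Odd α) : e (α / 2) = -1 := by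
  obtain ⟨c, rfl⟩ := hα
  rw [show (((2 * c + 1 : ℤ)) : ℂ) / 2 = 1 / 2 + c by push_cast; ring, e_add_intCast, e_half]

theorem e_quarter : e (1 / 4) = I := by
  rw [e, show 2 * (Real.pi : ℂ) * I * (1 / 4) = Real.pi / 2 * I by ring, exp_pi_div_two_mul_I]

theorem e_eighth_sq : e (1 / 8) ^ 2 = I := by
  rw [← e_natCast_mul, ← e_quarter]; norm_num

theorem sqrt_two_mul_e_eighth : (Real.sqrt 2 : ℂ) * e (1 / 8) = 1 + I := by
  rw [e, show 2 * (Real.pi : ℂ) * I * (1 / 8) = ((Real.pi / 4 : ℝ) : ℂ) * I by push_cast; ring,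
    exp_mul_I, ← ofReal_cos, ← ofReal_sin, Real.cos_pi_div_four, Real.sin_pi_div_four]
  have h : (Real.sqrt 2 : ℂ) ^ 2 = 2 := by norm_cast; simp
  push_cast
  linear_combination (1 + I) / 2 * h

theorem qzExp_coe (a : ℚ) : qzExp a = e a := by
  obtain ⟨k, hk⟩ := AddSubgroup.mem_zmultiples_iff.mp
    (QuotientAddGroup.eq.mp (Quotient.out_eq (a : AddCircle (1 : ℚ))))
  rw [zsmul_eq_mul, mul_one] at hk
  rw [qzExp, ← e, show (a : ℂ) = ((Quotient.out (a : AddCircle (1 : ℚ)) : ℚ) : ℂ) + k by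
    exact_mod_cast (by linarith : a = _ + (k : ℚ)), e_add_intCast]

noncomputable def dyadicGaussSum (α : ℤ) (r : ℕ) : ℂ :=
  ∑ k ∈ range (2 ^ r), e (α * k ^ 2 / 2 ^ (r + 1))

theorem e_quadratic_shift {α : ℤ} (hα : Odd α) {r : ℕ} (hr : 0 < r) (y : ℕ) :
    e (α * ((2 ^ (r + 1) + y : ℕ) : ℂ) ^ 2 / 2 ^ (r + 3)) =
      (-1) ^ y * e (α * (y : ℂ) ^ 2 / 2 ^ (r + 3)) := by
  obtain ⟨s, rfl⟩ : ∃ s, r = s + 1 := ⟨r - 1, by omega⟩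
  have h : α * ((2 ^ (s + 1 + 1) + y : ℕ) : ℂ) ^ 2 / 2 ^ (s + 1 + 3) =
      y * (α / 2) + α * (y : ℂ) ^ 2 / 2 ^ (s + 1 + 3) + ((α * 2 ^ s : ℤ) : ℂ) := by
    push_cast; field_simp; ring
  rw [h, e_add_intCast, e_add, e_natCast_mul, e_odd_div_two hα]

theorem dyadicGaussSum_add_two {α : ℤ} (hα : Odd α) {r : ℕ} (hr : 0 < r) :
    dyadicGaussSum α (r + 2) = 2 * dyadicGaussSum α r := by
  have hsplit : 2 ^ (r + 2) = 2 ^ (r + 1) + 2 ^ (r + 1) := by ring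
  have heven (z : ℕ) : e (α * ((2 * z : ℕ) : ℂ) ^ 2 / 2 ^ (r + 2 + 1)) =
      e (α * (z : ℂ) ^ 2 / 2 ^ (r + 1)) := by
    congr 1; push_cast; field_simp; ring
  rw [dyadicGaussSum, hsplit, sum_range_add,
    sum_congr rfl fun y _ => e_quadratic_shift hα hr y, ← sum_add_distrib]
  simp only [← one_add_mul]
  rw [pow_succ', sum_range_two_mul_one_add_neg_one_pow, dyadicGaussSum]
  simp only [heven]

theorem dyadicGaussSum_one {α : ℤ} (hα : Odd α) :
    dyadicGaussSum α 1 = Real.sqrt 2 * (-1) ^ ((α ^ 2 - 1) / 8) * e (α / 8) := by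
  obtain ⟨m, hm, hm4⟩ : ∃ m : ℕ, α % 8 = 2 * m + 1 ∧ m < 4 :=
    ⟨((α % 8) / 2).toNat, by obtain ⟨c, rfl⟩ := hα; omega, by omega⟩
  have hα8 : (α : ℂ) = (2 * m + 1 : ℕ) + ((8 * (α / 8) : ℤ) : ℂ) := by
    exact_mod_cast (by omega : α = (2 * m + 1 : ℕ) + 8 * (α / 8))
  have hquarter : e (α / 4) = I ^ (2 * m + 1) := by
    rw [hα8, add_div,
      show ((8 * (α / 8) : ℤ) : ℂ) / 4 = ((2 * (α / 8) : ℤ) : ℂ) by push_cast; ring, e_add_intCast,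
      div_eq_mul_one_div, e_natCast_mul, e_quarter]
  have heighth : e (α / 8) = I ^ m * e (1 / 8) := by
    rw [hα8, add_div, show ((8 * (α / 8) : ℤ) : ℂ) / 8 = ((α / 8 : ℤ) : ℂ) by push_cast; ring,
      e_add_intCast, div_eq_mul_one_div, e_natCast_mul, pow_succ, pow_mul, e_eighth_sq]
  have hsum : dyadicGaussSum α 1 = 1 + e (α / 4) := by
    rw [dyadicGaussSum, pow_one, sum_range_succ, sum_range_one]
    norm_num [e_zero]
  rw [hsum, hquarter, heighth, neg_one_zpow_sq_sub_one_div_eight_emod, hm, mul_right_comm,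
    mul_left_comm, sqrt_two_mul_e_eighth]
  interval_cases m <;> norm_num [pow_succ] <;> ring_nf <;> norm_num [I_sq] <;> ring

theorem dyadicGaussSum_two {α : ℤ} (hα : Odd α) : dyadicGaussSum α 2 = 2 * e (α / 8) := by
  norm_num [dyadicGaussSum, sum_range_succ]
  rw [e_zero, show (α : ℂ) * 4 / 8 = α / 2 by ring, e_odd_div_two hα,
    show (α : ℂ) * 9 / 8 = α / 8 + α by ring, e_add_intCast]
  ring

noncomputable def gaussSumScale (α : ℤ) (r : ℕ) : ℂ :=
  Real.sqrt (2 ^ r) * (-1) ^ ((r : ℤ) * ((α ^ 2 - 1) / 8))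

theorem gaussSumScale_zero (α : ℤ) : gaussSumScale α 0 = 1 := by
  simp [gaussSumScale]

theorem gaussSumScale_add_two (α : ℤ) (r : ℕ) :
    gaussSumScale α (r + 2) = 2 * gaussSumScale α r := by
  have hsqrt : Real.sqrt (2 ^ (r + 2)) = 2 * Real.sqrt (2 ^ r) := by
    rw [pow_add, mul_comm, Real.sqrt_mul (by positivity), Real.sqrt_sq (by norm_num)]
  have hsign (c : ℤ) : ((r + 2 : ℕ) : ℤ) * c = r * c + 2 * c := by
    push_cast; ring
  rw [gaussSumScale, gaussSumScale, hsqrt, hsign, zpow_add₀ (by norm_num),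
    (even_two_mul _).neg_one_zpow]
  push_cast; ring

theorem dyadicGaussSum_eq {α : ℤ} (hα : Odd α) {r : ℕ} (hr : 0 < r) :
    dyadicGaussSum α r = gaussSumScale α r * e (α / 8) := by
  induction r using Nat.twoStepInduction with
  | zero => exact absurd hr (lt_irrefl 0)
  | one => simp [dyadicGaussSum_one hα, gaussSumScale]
  | more n ih _ =>
    rw [gaussSumScale_add_two, mul_assoc]
    rcases Nat.eq_zero_or_pos n with rfl | hn
    · rw [dyadicGaussSum_two hα, gaussSumScale_zero, one_mul]
    · rw [dyadicGaussSum_add_two hα hn, ih hn]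

theorem gSum_eq_dyadicGaussSum (α : ℤ) (r : ℕ) (q : ZMod (2 ^ r) → AddCircle (1 : ℚ))
    (hq : ∀ x : ZMod (2 ^ r),
      q x = (((α : ℚ) * (x.val : ℚ) ^ 2 / 2 ^ (r + 1) : ℚ) : AddCircle (1 : ℚ))) :
    gSum (ZMod (2 ^ r)) q = dyadicGaussSum α r / Real.sqrt (2 ^ r) := by
  have hterm (x : ZMod (2 ^ r)) : qzExp (q x) = e (α * (x.val : ℂ) ^ 2 / 2 ^ (r + 1)) := by
    rw [hq, qzExp_coe]; push_cast; rfl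
  rw [gSum, finsum_eq_sum_of_fintype, Nat.card_zmod, dyadicGaussSum,
    ← ZMod.sum_val_eq_sum_range, sum_congr rfl fun x _ => hterm x]
  push_cast; ring

end DyadicGaussSum

theorem stmt8_general (r : ℕ) (hr : 0 < r) (α : ℤ) (hα : Odd α)
    (q : ZMod (2 ^ r) → AddCircle (1 : ℚ))
    (hq : ∀ x : ZMod (2 ^ r),
      q x = (((α : ℚ) * (x.val : ℚ) ^ 2 / 2 ^ (r + 1) : ℚ) : AddCircle (1 : ℚ))) :
    gSum (ZMod (2 ^ r)) q =
      (-1 : ℂ) ^ ((r : ℤ) * ((α ^ 2 - 1) / 8)) *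
        Complex.exp (2 * Real.pi * Complex.I * ((α : ℂ) / 8)) := by
  have hsqrt : (Real.sqrt (2 ^ r) : ℂ) ≠ 0 := by norm_cast; positivity
  rw [DyadicGaussSum.gSum_eq_dyadicGaussSum α r q hq, DyadicGaussSum.dyadicGaussSum_eq hα hr,
    DyadicGaussSum.gaussSumScale, mul_assoc, mul_div_cancel_left₀ _ hsqrt]
  rfl

/-- Gauss sum of q(x) = αx²/2^(r+1) on ℤ/2^rℤ. -/
theorem stmt8 (p : ℕ) (hp : p.Prime) (r : ℕ) (hr : 0 < r) (α : ℤ) (hα : Odd α)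
    (q : ZMod (2 ^ r) → AddCircle (1 : ℚ))
    (hq : ∀ x : ZMod (2 ^ r),
      q x = (((α : ℚ) * (x.val : ℚ) ^ 2 / 2 ^ (r + 1) : ℚ) : AddCircle (1 : ℚ))) :
    gSum (ZMod (2 ^ r)) q =
      (-1 : ℂ) ^ ((r : ℤ) * ((α ^ 2 - 1) / 8)) *
        Complex.exp (2 * Real.pi * Complex.I * ((α : ℂ) / 8)) :=
  stmt8_general r hr α hα q hq
end
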